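/- arXiv:2301.06105 — 2 statements merged into one kernel-verified Lean document; each statement's English description precedes it below -/
import Mathlib

section
/- Let G be a directed graph in which every vertex is reachable from s, and let P be an (s,t)-path whose suffix P_{v,t} (for some vertex v on P with dist_G(s,v) = p) satisfies: the first 2k edges of P_{v,t} stay within layers L_p, …, L_{p+j2} where j2 ≤ dist_G(s,t) − p, and P_{v,t} later visits a vertex w in layer L_{p+j1} with j1 ≤ k after leaving the first 2k+1 vertices. Then P_{v,t} contains at least k bad edges (edges not corresponding to the first entry of the path into a layer L_i with i ≤ dist_G(s,t)). -/
variable {V : Type*}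

/-- `l` is a (nonempty) directed walk in the digraph `G`. -/
def IsWalk (G : V → V → Prop) : List V → Prop
  | [] => False
  | [_] => True
  | a :: b :: l => G a b ∧ IsWalk G (b :: l)

/-- `l` is a simple directed path in `G`. -/
def IsPath (G : V → V → Prop) (l : List V) : Prop := IsWalk G l ∧ l.Nodup

/-- `l` is a walk from `s` to `t` in `G`. -/
def IsWalkFrom (G : V → V → Prop) (s t : V) (l : List V) : Prop :=
  IsWalk G l ∧ l.head? = some s ∧ l.getLast? = some t

/-- `l` is a simple path from `s` to `t` in `G`. -/
def IsPathFrom (G : V → V → Prop) (s t : V) (l : List V) : Prop :=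
  IsPath G l ∧ l.head? = some s ∧ l.getLast? = some t

/-- The length (number of edges) of a path given as a vertex list. -/
def pathLen (l : List V) : ℕ := l.length - 1

/-- Directed shortest-path distance (`⊤` if unreachable). -/
noncomputable def ddist (G : V → V → Prop) (s t : V) : ℕ∞ :=
  sInf {n : ℕ∞ | ∃ l, IsPathFrom G s t l ∧ (pathLen l : ℕ∞) = n}

/-- Edge `i` of the path `P` (from its `i`-th to `(i+1)`-st vertex) is *good* if its head is
the first vertex along `P` lying in some layer `L_j` with `1 ≤ j ≤ dist_G(s,t)`. -/
noncomputable def GoodEdge (G : V → V → Prop) (s t : V) (P : List V) (i : ℕ) : Prop :=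
  ∃ j : ℕ, 1 ≤ j ∧ (j : ℕ∞) ≤ ddist G s t ∧ ddist G s (P.getD (i+1) s) = (j : ℕ∞) ∧
    ∀ m ≤ i, ddist G s (P.getD m s) ≠ (j : ℕ∞)



/-!
Good edges of a path have pairwise distinct head layers, since the head of a good edge is the
first vertex of the path in its layer. On `P_{v,t}` these layers lie in `(p, dist(s,t)]`: every
layer `0, …, p` is already met by the prefix from `s` to `v`, distances growing by at most one
per edge. The vertex `w` in layer `p + j₁` after position `2k` bounds
`dist(s,t) ≤ p + j₁ + (|P_{v,t}| - 2k - 1)`, so at most `|P_{v,t}| - k - 1` edges of `P_{v,t}`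
are good.
-/

section Walks

variable {G : V → V → Prop}

theorem IsWalk.adj_getD (x : V) :
    ∀ {l : List V}, IsWalk G l → ∀ {i : ℕ}, i + 1 < l.length → G (l.getD i x) (l.getD (i + 1) x)
  | [], h, _, _ => h.elim
  | [_], _, _, hi => by simp at hi
  | _ :: b :: l, ⟨hab, hl⟩, i, hi => by
    cases i with
    | zero => simpa using hab
    | succ i => simpa using IsWalk.adj_getD x (l := b :: l) hl (i := i) (by simpa using hi)

theorem IsWalk.of_append_left : ∀ {l₁ l₂ : List V}, l₁ ≠ [] → IsWalk G (l₁ ++ l₂) → IsWalk G l₁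
  | [], _, h, _ => absurd rfl h
  | [_], _, _, _ => trivial
  | _ :: b :: l, _, _, ⟨hab, hl⟩ => ⟨hab, IsWalk.of_append_left (l₁ := b :: l) (by simp) hl⟩

theorem IsWalk.concat :
    ∀ {l : List V} {a b : V}, IsWalk G l → l.getLast? = some a → G a b → IsWalk G (l ++ [b])
  | [], _, _, h, _, _ => h.elim
  | [_], _, _, _, hl, hab => by
    simp only [List.getLast?_singleton, Option.some.injEq] at hl
    exact ⟨hl ▸ hab, trivial⟩
  | _ :: d :: l, _, _, ⟨hcd, hl⟩, hlast, hab =>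
    ⟨hcd, IsWalk.concat (l := d :: l) hl (by simpa using hlast) hab⟩

theorem IsWalk.getD_le_add {f : V → ℕ∞} (hf : ∀ a b, G a b → f b ≤ f a + 1) {l : List V}
    (hl : IsWalk G l) (x : V) {m n : ℕ} (hmn : m ≤ n) (hn : n < l.length) :
    f (l.getD n x) ≤ f (l.getD m x) + (n - m : ℕ) := by
  induction n, hmn using Nat.le_induction with
  | base => simp
  | succ n hmn ih =>
    calc f (l.getD (n + 1) x) ≤ f (l.getD n x) + 1 := hf _ _ (hl.adj_getD x hn)
      _ ≤ f (l.getD m x) + (n - m : ℕ) + 1 := by gcongr; exact ih (by omega)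
      _ = f (l.getD m x) + (n + 1 - m : ℕ) := by rw [Nat.sub_add_comm hmn]; push_cast; ring

theorem IsWalk.exists_getD_eq {f : V → ℕ∞} (hf : ∀ a b, G a b → f b ≤ f a + 1) {l : List V}
    (hl : IsWalk G l) (x : V) {j : ℕ∞} (h₀ : f (l.getD 0 x) ≤ j) :
    ∀ {n : ℕ}, n < l.length → j ≤ f (l.getD n x) → ∃ m ≤ n, f (l.getD m x) = j
  | 0, _, hj => ⟨0, le_rfl, le_antisymm h₀ hj⟩
  | n + 1, hn, hj => by
    by_cases hjn : j ≤ f (l.getD n x)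
    · obtain ⟨m, hm, hmj⟩ := hl.exists_getD_eq hf x h₀ (by omega) hjn
      exact ⟨m, by omega, hmj⟩
    · refine ⟨n + 1, le_rfl, le_antisymm ?_ hj⟩
      calc f (l.getD (n + 1) x) ≤ f (l.getD n x) + 1 := hf _ _ (hl.adj_getD x hn)
        _ ≤ j := Order.add_one_le_of_lt (not_le.mp hjn)

end Walks

theorem List.getD_zero_of_head? {l : List V} {a : V} (h : l.head? = some a) (x : V) :
    l.getD 0 x = a := by
  cases l <;> simp_all

theorem List.getD_length_sub_one_of_getLast? {l : List V} {a : V} (h : l.getLast? = some a)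
    (x : V) : l.getD (l.length - 1) x = a := by
  rw [List.getD_eq_getElem?_getD, ← List.getLast?_eq_getElem?, h, Option.getD_some]

section Distance

variable {G : V → V → Prop} {s : V}

theorem ddist_le_pathLen {w : V} {l : List V} (h : IsPathFrom G s w l) :
    ddist G s w ≤ pathLen l :=
  sInf_le ⟨l, h, rfl⟩

theorem ddist_self : ddist G s s = 0 :=
  nonpos_iff_eq_zero.mp <| by
    simpa [pathLen] using ddist_le_pathLen (G := G) (l := [s]) ⟨⟨trivial, by simp⟩, rfl, rfl⟩

theorem exists_isPathFrom_pathLen_eq_ddist {w : V} (h : ddist G s w ≠ ⊤) :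
    ∃ l, IsPathFrom G s w l ∧ (pathLen l : ℕ∞) = ddist G s w := by
  have hne : {n : ℕ∞ | ∃ l, IsPathFrom G s w l ∧ (pathLen l : ℕ∞) = n}.Nonempty := by
    by_contra hempty
    exact h (by rw [ddist, Set.not_nonempty_iff_eq_empty.mp hempty, sInf_empty])
  exact csInf_mem hne

theorem IsPathFrom.prefix {a b : V} {l₁ l₂ : List V} (h : IsPathFrom G s a (l₁ ++ b :: l₂)) :
    IsPathFrom G s b (l₁ ++ [b]) := by
  obtain ⟨⟨hw, hnd⟩, hhead, -⟩ := h
  have hsplit : l₁ ++ b :: l₂ = (l₁ ++ [b]) ++ l₂ := by simp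
  rw [hsplit] at hw hnd
  refine ⟨⟨hw.of_append_left (by simp), hnd.sublist (List.sublist_append_left _ _)⟩, ?_, by simp⟩
  cases l₁ <;> simp_all

theorem IsPathFrom.concat {a b : V} {l : List V} (h : IsPathFrom G s a l) (hab : G a b)
    (hb : b ∉ l) : IsPathFrom G s b (l ++ [b]) := by
  obtain ⟨⟨hw, hnd⟩, hhead, hlast⟩ := h
  refine ⟨⟨hw.concat hlast hab, List.nodup_append.mpr ⟨hnd, by simp, by grind⟩⟩, ?_, by simp⟩
  cases l <;> simp_all

theorem ddist_le_ddist_add_one_of_adj {a b : V} (hab : G a b) :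
    ddist G s b ≤ ddist G s a + 1 := by
  by_cases ha : ddist G s a = ⊤
  · simp [ha]
  obtain ⟨l, hl, hlen⟩ := exists_isPathFrom_pathLen_eq_ddist ha
  rw [← hlen]
  by_cases hb : b ∈ l
  · obtain ⟨l₁, l₂, rfl⟩ := List.append_of_mem hb
    calc ddist G s b ≤ pathLen (l₁ ++ [b]) := ddist_le_pathLen hl.prefix
      _ ≤ pathLen (l₁ ++ b :: l₂) + 1 := by
        exact_mod_cast show pathLen (l₁ ++ [b]) ≤ pathLen (l₁ ++ b :: l₂) + 1 by
          simp [pathLen]; omega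
  · calc ddist G s b ≤ pathLen (l ++ [b]) := ddist_le_pathLen (hl.concat hab hb)
      _ = pathLen l + 1 := by
        have : 0 < l.length := by cases l <;> simp_all [IsPathFrom]
        norm_cast; simp [pathLen]; omega

end Distance

section GoodEdges

variable {G : V → V → Prop} {s t : V} {P : List V}

theorem GoodEdge.eq_of_ddist_eq {a b : ℕ} (ha : GoodEdge G s t P a) (hb : GoodEdge G s t P b)
    (h : ddist G s (P.getD (a + 1) s) = ddist G s (P.getD (b + 1) s)) : a = b := by
  have key : ∀ {a b : ℕ}, a < b → GoodEdge G s t P b →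
      ddist G s (P.getD (a + 1) s) ≠ ddist G s (P.getD (b + 1) s) := by
    rintro a b hab ⟨j, -, -, hj, hfirst⟩ h
    exact hfirst (a + 1) hab (h.trans hj)
  rcases lt_trichotomy a b with hab | rfl | hab
  · exact absurd h (key hab hb)
  · rfl
  · exact absurd h.symm (key hab ha)

theorem ncard_goodEdge_le {base L p D : ℕ} (hD : ddist G s t ≤ D)
    (hlow : ∀ j ≤ p, ∃ m ≤ base, ddist G s (P.getD m s) = j) :
    {i | i < L ∧ GoodEdge G s t P (base + i)}.ncard ≤ D - p := by
  have hmaps : ∀ i ∈ {i | i < L ∧ GoodEdge G s t P (base + i)},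
      (ddist G s (P.getD (base + i + 1) s)).toNat ∈ Set.Icc (p + 1) D := by
    rintro i ⟨-, j, -, hjD, hj, hfirst⟩
    rw [hj, ENat.toNat_natCast, Set.mem_Icc]
    refine ⟨Nat.succ_le_of_lt (not_le.mp fun hjp => ?_), by exact_mod_cast hjD.trans hD⟩
    obtain ⟨m, hm, hmj⟩ := hlow j hjp
    exact hfirst m (by omega) hmj
  have hinj : Set.InjOn (fun i => (ddist G s (P.getD (base + i + 1) s)).toNat)
      {i | i < L ∧ GoodEdge G s t P (base + i)} := by
    rintro a ⟨-, ga⟩ b ⟨-, gb⟩ hab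
    obtain ⟨ja, -, -, hja, -⟩ := id ga
    obtain ⟨jb, -, -, hjb, -⟩ := id gb
    simp only [hja, hjb, ENat.toNat_natCast] at hab
    have := ga.eq_of_ddist_eq gb (by rw [hja, hjb, hab])
    omega
  simpa using Set.ncard_le_ncard_of_injOn _ hmaps hinj

theorem le_ncard_not_goodEdge {base L p D : ℕ} (hD : ddist G s t ≤ D)
    (hlow : ∀ j ≤ p, ∃ m ≤ base, ddist G s (P.getD m s) = j) :
    L - (D - p) ≤ {i | i < L ∧ ¬ GoodEdge G s t P (base + i)}.ncard := by
  have hsplit := Set.ncard_inter_add_ncard_sdiff_eq_ncard (Set.Iio L)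
    {i | GoodEdge G s t P (base + i)}
  have hgood : (Set.Iio L ∩ {i | GoodEdge G s t P (base + i)}).ncard ≤ D - p :=
    ncard_goodEdge_le hD hlow
  rw [Set.ncard_Iio_nat] at hsplit
  change _ ≤ (Set.Iio L \ {i | GoodEdge G s t P (base + i)}).ncard
  omega

end GoodEdges

theorem stmt_10_general (G : V → V → Prop) (s t v : V) (p k j1 : ℕ)
    (Pre Q : List V)
    (hPre : IsPathFrom G s v Pre) (hQ : IsPathFrom G v t Q)
    (hv : ddist G s v = (p : ℕ∞))
    (hj1 : j1 ≤ k)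
    (hw : ∃ i : ℕ, 2*k < i ∧ i < Q.length ∧ ddist G s (Q.getD i s) = ((p + j1 : ℕ) : ℕ∞)) :
    k ≤ {i | i < pathLen Q ∧ ¬ GoodEdge G s t (Pre ++ Q.tail) (pathLen Pre + i)}.ncard := by
  obtain ⟨⟨hPreW, -⟩, hPreH, hPreL⟩ := hPre
  obtain ⟨⟨hQW, -⟩, -, hQL⟩ := hQ
  obtain ⟨i, hik, hiQ, hid⟩ := hw
  have hstep : ∀ a b, G a b → ddist G s b ≤ ddist G s a + 1 :=
    fun _ _ => ddist_le_ddist_add_one_of_adj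
  have ht : ddist G s t ≤ ((p + j1 + (pathLen Q - i) : ℕ) : ℕ∞) := by
    have := hQW.getD_le_add hstep s (m := i) (n := pathLen Q) (by unfold pathLen; omega)
      (by unfold pathLen; omega)
    rwa [pathLen, List.getD_length_sub_one_of_getLast? hQL, hid, ← Nat.cast_add] at this
  have hlow : ∀ j ≤ p, ∃ m ≤ pathLen Pre, ddist G s ((Pre ++ Q.tail).getD m s) = j := by
    intro j hj
    have hPreLen : pathLen Pre < Pre.length := by
      unfold pathLen; cases Pre <;> simp_all
    obtain ⟨m, hm, hmj⟩ := hPreW.exists_getD_eq hstep s (j := j)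
      (by rw [List.getD_zero_of_head? hPreH, ddist_self]; exact bot_le) hPreLen
      (by rw [pathLen, List.getD_length_sub_one_of_getLast? hPreL, hv]; exact_mod_cast hj)
    exact ⟨m, hm, by rwa [List.getD_append _ _ _ _ (by omega)]⟩
  have := le_ncard_not_goodEdge (L := pathLen Q) ht hlow
  unfold pathLen at this ⊢
  omega

theorem stmt_10 (G : V → V → Prop) (s t v : V) (p k j1 j2 : ℕ)
    (Pre Q : List V)
    (hreach : ∀ w : V, ∃ l, IsPathFrom G s w l)
    (hPre : IsPathFrom G s v Pre) (hQ : IsPathFrom G v t Q)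
    (hP : IsPathFrom G s t (Pre ++ Q.tail))
    (hv : ddist G s v = (p : ℕ∞))
    (hj2 : ((p + j2 : ℕ) : ℕ∞) ≤ ddist G s t)
    (hseg : ∀ i ≤ min (2*k) (pathLen Q),
      (p : ℕ∞) ≤ ddist G s (Q.getD i s) ∧ ddist G s (Q.getD i s) ≤ ((p + j2 : ℕ) : ℕ∞))
    (hj1 : j1 ≤ k)
    (hw : ∃ i : ℕ, 2*k < i ∧ i < Q.length ∧ ddist G s (Q.getD i s) = ((p + j1 : ℕ) : ℕ∞)) :
    k ≤ {i | i < pathLen Q ∧ ¬ GoodEdge G s t (Pre ++ Q.tail) (pathLen Pre + i)}.ncard :=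
  stmt_10_general G s t v p k j1 Pre Q hPre hQ hv hj1 hw
end

section
/- Let P be a shortest solution path with vertices u, v as the first and second vertices in the first layer L_p containing more than one vertex of P, x the (k+1)-st vertex of the subpath P_{u,v}, and suppose P' is any (u,x)-path of length at most k contained in layers of index ≥ p that is disjoint from the subpath P_{y,z} (the last min{k+1,|V(P_{x,v})|} vertices of P_{u,v} together with the first min{2k+1,|V(P_{v,t})|} vertices of P_{v,t}). Then P' is disjoint from the entire subpath P_{x,t} of P except at the vertex x. -/
variable {V : Type*}

/-!
Below layer `p` the path `P` has at most one vertex per layer, so its prefix up to `u` is a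
shortest path and `u = P[p]`. A shortest `(s,v)`-path runs below layer `p` before reaching `v`,
hence avoids `P_{v,t}` there, and gluing it to `P_{v,t}` gives an `(s,t)`-path `R` strictly
shorter than `P`; by minimality of `P` and the gap hypothesis,
`dist(s,t) ≤ |R| < dist(s,t) + k`.

If `P'` met `P_{x,t}` elsewhere than at `x`, cut `P'` at its first vertex `P[j]` beyond `x` and
form `Q = P_{s,u} P'_{u,P[j]} P_{P[j],t}`, again an `(s,t)`-path shorter than `P`. Since
`P[j]` avoids `P_{y,z}`, either `j` lies more than `k` steps before `v`, so that `|Q| > |R| + k`,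
or more than `2k` steps after `v`, so that `|Q| < |R| - k`; both contradict
`dist(s,t) ≤ |Q| < dist(s,t) + k`.
-/

section Paths

variable {G : V → V → Prop} {a b c : V} {l l₁ l₂ : List V}

theorem isWalk_iff_isChain : ∀ {l : List V}, IsWalk G l ↔ l ≠ [] ∧ l.IsChain G
  | [] => by simp [IsWalk]
  | [_] => by simp [IsWalk]
  | _ :: b :: l => by
    rw [IsWalk, isWalk_iff_isChain (l := b :: l)]
    simp [List.isChain_cons_cons]

theorem List.Nodup.getD_inj (h : l.Nodup) (d : V) {i j : ℕ} (hi : i < l.length)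
    (hj : j < l.length) (hij : l.getD i d = l.getD j d) : i = j := by
  rwa [List.getD_eq_getElem _ _ hi, List.getD_eq_getElem _ _ hj, h.getElem_inj_iff] at hij

theorem List.getD_mem (d : V) {i : ℕ} (hi : i < l.length) : l.getD i d ∈ l := by
  rw [List.getD_eq_getElem _ _ hi]; exact List.getElem_mem hi

theorem List.dropLast_take_add_one {n : ℕ} (h : n < l.length) :
    (l.take (n + 1)).dropLast = l.take n := by
  rw [List.dropLast_eq_take, List.take_take, List.length_take]
  congr 1; omega

theorem List.exists_getD_eq_of_mem_take (d : V) {n : ℕ} (h : a ∈ l.take n) :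
    ∃ i < n, i < l.length ∧ l.getD i d = a := by
  obtain ⟨i, hi, rfl⟩ := List.mem_take_iff_getElem.1 h
  exact ⟨i, by omega, by omega, List.getD_eq_getElem _ _ _⟩

theorem List.exists_getD_eq_of_mem_drop (d : V) {n : ℕ} (h : a ∈ l.drop n) :
    ∃ i, n ≤ i ∧ i < l.length ∧ l.getD i d = a := by
  obtain ⟨i, hi, rfl⟩ := List.mem_drop_iff_getElem.1 h
  exact ⟨n + i, by omega, by omega, List.getD_eq_getElem _ _ _⟩

theorem IsPathFrom.ne_nil (h : IsPathFrom G a b l) : l ≠ [] :=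
  (isWalk_iff_isChain.1 h.1.1).1

theorem IsPathFrom.take (h : IsPathFrom G a b l) (d : V) {m : ℕ} (hm : m < l.length) :
    IsPathFrom G a (l.getD m d) (l.take (m + 1)) := by
  obtain ⟨⟨hw, hnd⟩, hh, ht⟩ := h
  refine ⟨⟨isWalk_iff_isChain.2 ⟨?_, (isWalk_iff_isChain.1 hw).2.take _⟩,
    hnd.sublist (List.take_sublist _ _)⟩, ?_, ?_⟩
  · exact List.ne_nil_of_length_pos (by simp; omega)
  · simpa [List.head?_take] using hh
  · simp [List.getLast?_take, hm]

theorem IsPathFrom.drop (h : IsPathFrom G a b l) (d : V) {m : ℕ} (hm : m < l.length) :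
    IsPathFrom G (l.getD m d) b (l.drop m) := by
  obtain ⟨⟨hw, hnd⟩, hh, ht⟩ := h
  refine ⟨⟨isWalk_iff_isChain.2 ⟨?_, (isWalk_iff_isChain.1 hw).2.drop _⟩,
    hnd.sublist (List.drop_sublist _ _)⟩, ?_, ?_⟩
  · exact List.ne_nil_of_length_pos (by simp; omega)
  · simp [List.head?_drop, hm]
  · simpa [List.getLast?_drop, hm.not_ge] using ht

theorem IsPathFrom.append (h₁ : IsPathFrom G a b l₁) (h₂ : IsPathFrom G b c l₂)
    (hdisj : l₁.dropLast.Disjoint l₂) : IsPathFrom G a c (l₁.dropLast ++ l₂) := by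
  obtain ⟨⟨hw₁, hnd₁⟩, hh₁, ht₁⟩ := h₁
  obtain ⟨⟨hw₂, hnd₂⟩, hh₂, ht₂⟩ := h₂
  obtain ⟨L, rfl⟩ : ∃ L, l₁ = L ++ [b] := by
    obtain ⟨L, x, rfl⟩ := (List.eq_nil_or_concat l₁).resolve_left (isWalk_iff_isChain.1 hw₁).1
    exact ⟨L, by simp_all⟩
  obtain ⟨M, rfl⟩ : ∃ M, l₂ = b :: M := by
    cases l₂ with
    | nil => simp at hh₂
    | cons x M => exact ⟨M, by simp_all⟩
  rw [List.dropLast_concat] at hdisj ⊢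
  refine ⟨⟨isWalk_iff_isChain.2 ⟨by simp, ?_⟩, ?_⟩, ?_, ?_⟩
  · simpa using ((isWalk_iff_isChain.1 hw₁).2.append_overlap (isWalk_iff_isChain.1 hw₂).2
      (l₂ := [b]) (by simp))
  · exact List.nodup_append'.2 ⟨(List.nodup_append.1 hnd₁).1, hnd₂, hdisj⟩
  · cases L <;> simp_all
  · simp_all [List.getLast?_append]

theorem pathLen_take_add_one {m : ℕ} (hm : m < l.length) : pathLen (l.take (m + 1)) = m := by
  simp only [pathLen, List.length_take]; omega

theorem pathLen_drop (m : ℕ) : pathLen (l.drop m) = pathLen l - m := by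
  simp only [pathLen, List.length_drop]; omega

theorem pathLen_dropLast_append (h₁ : l₁ ≠ []) (h₂ : l₂ ≠ []) :
    pathLen (l₁.dropLast ++ l₂) = pathLen l₁ + pathLen l₂ := by
  have := List.length_pos_iff.2 h₁
  have := List.length_pos_iff.2 h₂
  simp only [pathLen, List.length_append, List.length_dropLast]; omega

theorem IsPathFrom.ddist_le (h : IsPathFrom G a b l) : ddist G a b ≤ pathLen l :=
  sInf_le ⟨l, h, rfl⟩

theorem IsPathFrom.ddist_getD_le (h : IsPathFrom G a b l) (d : V) {m : ℕ} (hm : m < l.length) :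
    ddist G a (l.getD m d) ≤ m := by
  simpa [pathLen_take_add_one hm] using (h.take d hm).ddist_le

theorem exists_isPathFrom_of_ddist_eq {n : ℕ} (h : ddist G a b = n) :
    ∃ l, IsPathFrom G a b l ∧ pathLen l = n := by
  have hne : {m : ℕ∞ | ∃ l, IsPathFrom G a b l ∧ (pathLen l : ℕ∞) = m}.Nonempty := by
    by_contra hem
    rw [Set.not_nonempty_iff_eq_empty] at hem
    simp [ddist, hem] at h
  obtain ⟨l, hl, hlen⟩ := csInf_mem hne
  exact ⟨l, hl, by exact_mod_cast hlen.trans h⟩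

end Paths

section Layers

variable {G : V → V → Prop} {s t : V} {P : List V} {p : ℕ}

theorem ddist_getD_eq_self_of_le {iu : ℕ} (hP : IsPathFrom G s t P) (hiu : iu < P.length)
    (hpmin : ∀ q : ℕ, q < p →
      ¬ ∃ a ∈ P, ∃ b ∈ P, a ≠ b ∧ ddist G s a = (q : ℕ∞) ∧ ddist G s b = (q : ℕ∞))
    (hfirst : ∀ m < iu, ddist G s (P.getD m s) ≠ (p : ℕ∞)) :
    ∀ m ≤ iu, ddist G s (P.getD m s) = m := by
  intro m
  induction m using Nat.strong_induction_on with
  | _ m ih =>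
  intro hm
  have hmP : m < P.length := by omega
  obtain ⟨q, hq, hqm⟩ := ENat.le_natCast_iff.1 (hP.ddist_getD_le s hmP)
  obtain hqm | rfl := hqm.lt_or_eq
  · have hPq := ih q hqm (by omega)
    rcases lt_trichotomy q p with hqp | rfl | hpq
    · refine absurd ⟨_, List.getD_mem s (by omega), _, List.getD_mem s hmP, fun h => ?_, hPq, hq⟩
        (hpmin q hqp)
      exact hqm.ne (hP.1.2.getD_inj s (by omega) hmP h)
    · exact absurd hPq (hfirst q (by omega))
    · exact absurd (ih p (by omega) (by omega)) (hfirst p (by omega))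
  · exact hq

theorem disjoint_take_of_le_ddist {P' : List V} {iu : ℕ}
    (hlayer : ∀ m ≤ iu, ddist G s (P.getD m s) = m) (hP' : ∀ w ∈ P', (iu : ℕ∞) ≤ ddist G s w) :
    (P.take iu).Disjoint P' := fun a haP haP' => by
  obtain ⟨m, hm, -, rfl⟩ := List.exists_getD_eq_of_mem_take s haP
  have := hlayer m hm.le ▸ hP' _ haP'
  norm_cast at this
  omega

theorem isPathFrom_dropLast_append_drop {g : List V} {iv : ℕ} (hP : IsPathFrom G s t P)
    (hiv : iv < P.length) (hg : IsPathFrom G s (P.getD iv s) g) (hgp : pathLen g ≤ p)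
    (hpiv : p ≤ iv)
    (hpmin : ∀ q : ℕ, q < p →
      ¬ ∃ a ∈ P, ∃ b ∈ P, a ≠ b ∧ ddist G s a = (q : ℕ∞) ∧ ddist G s b = (q : ℕ∞))
    (hlayer : ∀ q < p, ddist G s (P.getD q s) = q) :
    IsPathFrom G s t (g.dropLast ++ P.drop iv) := by
  refine hg.append (hP.drop s hiv) fun a hag haP => ?_
  rw [List.dropLast_eq_take] at hag
  obtain ⟨e, he, heg, rfl⟩ := List.exists_getD_eq_of_mem_take s hag
  obtain ⟨m, hivm, hmP, hm⟩ := List.exists_getD_eq_of_mem_drop s haP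
  obtain ⟨q, hq, hqe⟩ := ENat.le_natCast_iff.1 (hg.ddist_getD_le s heg)
  have hqp : q < p := by unfold pathLen at hgp; omega
  refine hpmin q hqp ⟨_, List.getD_mem s (by omega), _, List.getD_mem s hmP, fun h => ?_,
    hlayer q hqp, hm ▸ hq⟩
  have := hP.1.2.getD_inj s (by omega) hmP h
  omega

theorem exists_detour {P' : List V} {b : V} {iu i : ℕ} (hP : IsPathFrom G s t P)
    (hP' : IsPathFrom G (P.getD iu s) b P') (hiu : iu ≤ i) (hiuP : iu < P.length)
    (hdisj : (P.take iu).Disjoint P')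
    (hmeet : ∃ w ∈ P', ∃ j, i ≤ j ∧ j < P.length ∧ w = P.getD j s) :
    ∃ d < P'.length, ∃ j, i ≤ j ∧ j < P.length ∧ P'.getD d s = P.getD j s ∧
      ∃ Q, IsPathFrom G s t Q ∧ pathLen Q = iu + d + (pathLen P - j) := by
  classical
  replace hmeet : ∃ d < P'.length, ∃ j, i ≤ j ∧ j < P.length ∧ P'.getD d s = P.getD j s := by
    obtain ⟨w, hw, j, hij, hj, rfl⟩ := hmeet
    obtain ⟨d, -, hd, hdw⟩ := List.exists_getD_eq_of_mem_take s (P'.take_length ▸ hw)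
    exact ⟨d, hd, j, hij, hj, hdw⟩
  obtain ⟨hd, j, hij, hj, hdj⟩ := Nat.find_spec hmeet
  set d := Nat.find hmeet
  have hfirst : (P'.take d).Disjoint (P.drop j) := fun a had haj => by
    obtain ⟨e, hed, heP', rfl⟩ := List.exists_getD_eq_of_mem_take s had
    obtain ⟨m, hjm, hmP, hm⟩ := List.exists_getD_eq_of_mem_drop s haj
    exact Nat.find_min hmeet hed ⟨heP', m, by omega, hmP, hm.symm⟩
  have htail := (hP'.take s hd).append (hdj ▸ hP.drop s hj)
    (by rwa [List.dropLast_take_add_one hd])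
  refine ⟨d, hd, j, hij, hj, hdj, _, (hP.take s hiuP).append htail ?_, ?_⟩
  · rw [List.dropLast_take_add_one hiuP, List.dropLast_take_add_one hd]
    exact List.disjoint_append_right.2
      ⟨List.disjoint_of_subset_right (List.take_subset _ _) hdisj,
        List.disjoint_take_drop hP.1.2 (by omega)⟩
  · rw [pathLen_dropLast_append (hP.take s hiuP).ne_nil htail.ne_nil, pathLen_take_add_one hiuP,
      pathLen_dropLast_append (hP'.take s hd).ne_nil (hP.drop s hj).ne_nil,
      pathLen_take_add_one hd, pathLen_drop]
    omega

theorem pathLen_bounds_of_lt {k D : ℕ} {Q : List V} (hD : ddist G s t = D)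
    (hgap : ∀ Q, IsPathFrom G s t Q → ddist G s t + (k : ℕ∞) ≤ (pathLen Q : ℕ∞) →
      ddist G s t + ((2*k : ℕ) : ℕ∞) ≤ (pathLen Q : ℕ∞))
    (hmin : ∀ Q, IsPathFrom G s t Q → ddist G s t + ((2*k : ℕ) : ℕ∞) ≤ (pathLen Q : ℕ∞) →
      pathLen P ≤ pathLen Q)
    (hQ : IsPathFrom G s t Q) (hlt : pathLen Q < pathLen P) :
    D ≤ pathLen Q ∧ pathLen Q < D + k := by
  refine ⟨by exact_mod_cast hD ▸ hQ.ddist_le, ?_⟩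
  by_contra! hge
  have := hmin Q hQ (hgap Q hQ (by rw [hD]; exact_mod_cast hge))
  omega

end Layers

theorem stmt_15_general (G : V → V → Prop) (s t : V) (k p : ℕ) (P P' : List V)
    (iu iv ix iy iz : ℕ)
    (hgap : ∀ Q, IsPathFrom G s t Q → ddist G s t + (k : ℕ∞) ≤ (pathLen Q : ℕ∞) →
      ddist G s t + ((2*k : ℕ) : ℕ∞) ≤ (pathLen Q : ℕ∞))
    (hP : IsPathFrom G s t P)
    (hmin : ∀ Q, IsPathFrom G s t Q → ddist G s t + ((2*k : ℕ) : ℕ∞) ≤ (pathLen Q : ℕ∞) →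
      pathLen P ≤ pathLen Q)
    (hiu : iu < iv) (hiv : iv < P.length)
    (hu : ddist G s (P.getD iu s) = (p : ℕ∞)) (hv : ddist G s (P.getD iv s) = (p : ℕ∞))
    (hfirst : ∀ m < iu, ddist G s (P.getD m s) ≠ (p : ℕ∞))
    (hpmin : ∀ q : ℕ, q < p →
      ¬ ∃ a ∈ P, ∃ b ∈ P, a ≠ b ∧ ddist G s a = (q : ℕ∞) ∧ ddist G s b = (q : ℕ∞))
    (hix : ix = iu + k) (hxlt : ix < iv)
    (hiy : iy = iv - (min (k+1) (iv - ix + 1) - 1))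
    (hiz : iz = iv + (min (2*k+1) (P.length - iv) - 1))
    (hP' : IsPathFrom G (P.getD iu s) (P.getD ix s) P')
    (hP'len : pathLen P' ≤ k)
    (hP'layer : ∀ w ∈ P', (p : ℕ∞) ≤ ddist G s w)
    (hP'disj : ∀ w ∈ P', ∀ j, iy ≤ j → j ≤ iz → w ≠ P.getD ix s → w ≠ P.getD j s) :
    ∀ w ∈ P', (∃ j, ix ≤ j ∧ j < P.length ∧ w = P.getD j s) → w = P.getD ix s := by
  obtain ⟨D, hD, -⟩ := ENat.le_natCast_iff.1 hP.ddist_le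
  have hlayer := ddist_getD_eq_self_of_le hP (by omega) hpmin hfirst
  obtain rfl : iu = p := by exact_mod_cast (hlayer iu le_rfl).symm.trans hu
  obtain ⟨g, hg, hglen⟩ := exists_isPathFrom_of_ddist_eq hv
  have hR := isPathFrom_dropLast_append_drop hP hiv hg hglen.le hiu.le hpmin
    fun q hq => hlayer q hq.le
  have hRlen := pathLen_dropLast_append hg.ne_nil (hP.drop s hiv).ne_nil
  rw [hglen, pathLen_drop] at hRlen
  rintro w hw ⟨j, hj, hjP, rfl⟩
  by_contra hwx
  obtain ⟨d, hd, j₀, hj₀, hj₀P, hdj, Q, hQ, hQlen⟩ :=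
    exists_detour hP hP' (i := ix + 1) (by omega) (by omega)
      (disjoint_take_of_le_ddist hlayer hP'layer)
      ⟨_, hw, j, hj.lt_of_ne (by rintro rfl; exact hwx rfl), hjP, rfl⟩
  have hj₀y : ¬ (iy ≤ j₀ ∧ j₀ ≤ iz) := fun h =>
    hP'disj _ (List.getD_mem s hd) j₀ h.1 h.2
      (fun h => by have := hP.1.2.getD_inj s hj₀P (by omega) (hdj ▸ h); omega) hdj
  unfold pathLen at hP'len
  have hPlen : pathLen P + 1 = P.length := by unfold pathLen; omega
  have hRb := pathLen_bounds_of_lt hD hgap hmin hR (by omega)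
  have hQb := pathLen_bounds_of_lt hD hgap hmin hQ (by omega)
  omega

theorem stmt_15 (G : V → V → Prop) (s t : V) (k p : ℕ) (P P' : List V)
    (iu iv ix iy iz : ℕ)
    (hreach : ∀ w : V, ∃ l, IsPathFrom G s w l)
    (hk : 1 ≤ k)
    (hgap : ∀ Q, IsPathFrom G s t Q → ddist G s t + (k : ℕ∞) ≤ (pathLen Q : ℕ∞) →
      ddist G s t + ((2*k : ℕ) : ℕ∞) ≤ (pathLen Q : ℕ∞))
    (hP : IsPathFrom G s t P)
    (hPsol : ddist G s t + ((2*k : ℕ) : ℕ∞) ≤ (pathLen P : ℕ∞))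
    (hmin : ∀ Q, IsPathFrom G s t Q → ddist G s t + ((2*k : ℕ) : ℕ∞) ≤ (pathLen Q : ℕ∞) →
      pathLen P ≤ pathLen Q)
    (hiu : iu < iv) (hiv : iv < P.length)
    (hu : ddist G s (P.getD iu s) = (p : ℕ∞)) (hv : ddist G s (P.getD iv s) = (p : ℕ∞))
    (hfirst : ∀ m < iu, ddist G s (P.getD m s) ≠ (p : ℕ∞))
    (hsecond : ∀ m, iu < m → m < iv → ddist G s (P.getD m s) ≠ (p : ℕ∞))
    (hpmin : ∀ q : ℕ, q < p →
      ¬ ∃ a ∈ P, ∃ b ∈ P, a ≠ b ∧ ddist G s a = (q : ℕ∞) ∧ ddist G s b = (q : ℕ∞))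
    (hix : ix = iu + k) (hxlt : ix < iv)
    (hiy : iy = iv - (min (k+1) (iv - ix + 1) - 1))
    (hiz : iz = iv + (min (2*k+1) (P.length - iv) - 1))
    (hP' : IsPathFrom G (P.getD iu s) (P.getD ix s) P')
    (hP'len : pathLen P' ≤ k)
    (hP'layer : ∀ w ∈ P', (p : ℕ∞) ≤ ddist G s w)
    (hP'disj : ∀ w ∈ P', ∀ j, iy ≤ j → j ≤ iz → w ≠ P.getD ix s → w ≠ P.getD j s) :
    ∀ w ∈ P', (∃ j, ix ≤ j ∧ j < P.length ∧ w = P.getD j s) → w = P.getD ix s :=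
  stmt_15_general G s t k p P P' iu iv ix iy iz hgap hP hmin hiu hiv hu hv hfirst hpmin hix hxlt hiy
    hiz hP' hP'len hP'layer hP'disj
end
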